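/- arXiv:0804.3969 — 2 statements merged into one kernel-verified Lean document; each statement's English description precedes it below -/
import Mathlib

section
/- With D the modular derivation above and ∂ = dz ∂_z the holomorphic exterior differential extended to Ω_c^*(Σ) ⋊ G (acting only on the form part and commuting with the G-symbols appropriately), the commutator δ = [∂, D] satisfies δ² = 0 and δ(f U*_g) = (∂ log g') f U*_g; moreover δ anticommutes with ∂. -/
open Topology

/-- Partial action of `G` on `ℂ` by local conformal transformations. -/
structure PartialConformalAction (G : Type*) [Group G] where
  Dom : G → Set ℂ
  act : G → ℂ → ℂ
  isOpen_dom : ∀ g, IsOpen (Dom g)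
  holo : ∀ g, DifferentiableOn ℂ (act g) (Dom g)
  injOn : ∀ g, Set.InjOn (act g) (Dom g)
  act_one : ∀ z ∈ Dom 1, act 1 z = z
  dom_inv : ∀ g, Dom g⁻¹ = act g '' Dom g
  act_inv : ∀ g, ∀ z ∈ Dom g, act g⁻¹ (act g z) = z
  dom_mul : ∀ g h : G, (act h) ⁻¹' (Dom g) ∩ Dom h ⊆ Dom (g * h)
  act_mul : ∀ g h : G, ∀ z ∈ Dom h, act h z ∈ Dom g → act (g * h) z = act g (act h z)

/-- The Wirtinger derivative `∂_z f = (∂_x f − i ∂_y f)/2`. -/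
noncomputable def wDeriv (f : ℂ → ℂ) : ℂ → ℂ := fun z =>
  (fderiv ℝ f z 1 - Complex.I * fderiv ℝ f z Complex.I) / 2

/-- The crossed product `Ω_c^*(ℂ) ⋊ G` of differential forms on `ℂ` in bidegree `(p,q)`:
the coefficient of `dz^p ∧ dz̄^q U*_g` is stored at index `(p, q)`. -/
def FormCP (G : Type*) [Group G] : Type _ := Fin 2 → Fin 2 → (G →₀ (ℂ → ℂ))

noncomputable instance (G : Type*) [Group G] : AddCommGroup (FormCP G) :=
  inferInstanceAs (AddCommGroup (Fin 2 → Fin 2 → (G →₀ (ℂ → ℂ))))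

/-- The holomorphic differential `∂ = dz ∂_z`, acting on the form part only and commuting with
the symbols `U*_g`. -/
noncomputable def delOp {G : Type*} [Group G] (a : FormCP G) : FormCP G := fun p q =>
  if p = 1 then (a 0 q).sum (fun g f => Finsupp.single g (fun z => wDeriv f z)) else 0

/-- The modular operator `D(f U*_g) = ln|g'|² f U*_g`, of degree zero. -/
noncomputable def DopF {G : Type*} [Group G] (P : PartialConformalAction G)
    (a : FormCP G) : FormCP G := fun p q =>
  (a p q).sum fun g f => Finsupp.single g
    (fun z => ((Real.log (‖deriv (P.act g) z‖ ^ 2) : ℝ) : ℂ) * f z)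

/-- The modular differential `δ = [∂, D] = ∂D − D∂`. -/
noncomputable def deltaOp {G : Type*} [Group G] (P : PartialConformalAction G)
    (a : FormCP G) : FormCP G :=
  delOp (DopF P a) - DopF P (delOp a)

/-- The single symbol `f dz̄^q U*_g`, placed in bidegree `(0, q)`. -/
noncomputable def symCP {G : Type*} [Group G] (g : G) (f : ℂ → ℂ) (q : Fin 2) : FormCP G :=
  fun p q' => if p = 0 ∧ q' = q then Finsupp.single g f else 0


open Filter in
theorem deriv_ne_zero_of_injOn' {U : Set ℂ} (hU : IsOpen U) {φ : ℂ → ℂ}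
    (hφ : DifferentiableOn ℂ φ U) (hinj : Set.InjOn φ U) {z₀ : ℂ} (hz₀ : z₀ ∈ U) :
    deriv φ z₀ ≠ 0 := by
  intro hd
  have hUz : U ∈ 𝓝 z₀ := hU.mem_nhds hz₀
  set ψ : ℂ → ℂ := fun z => φ z - φ z₀ with hψdef
  have hφa : AnalyticAt ℂ φ z₀ := hφ.analyticAt hUz
  have hψa : AnalyticAt ℂ ψ z₀ := hφa.sub analyticAt_const
  have hψ0 : ψ z₀ = 0 := sub_self _
  rcases eq_or_ne (analyticOrderAt ψ z₀) ⊤ with htop | hne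
  · -- ψ eventually 0 near z₀ : contradict injectivity on punctured nbhd
    have hev : ∀ᶠ z in 𝓝 z₀, ψ z = 0 := analyticOrderAt_eq_top.1 htop
    have h' : ∀ᶠ z in 𝓝[≠] z₀, ψ z = 0 ∧ z ∈ U :=
      (hev.and hUz).filter_mono nhdsWithin_le_nhds
    obtain ⟨z, ⟨hz1, hz2⟩, hzne⟩ := (h'.and self_mem_nhdsWithin).exists
    exact hzne (hinj hz2 hz₀ (sub_eq_zero.1 hz1))
  · lift analyticOrderAt ψ z₀ to ℕ using hne with n hn
    obtain ⟨g, hg, hg0, hev⟩ := (hψa.analyticOrderAt_eq_natCast).1 hn.symm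
    have hn0 : n ≠ 0 := by
      rintro rfl
      have h00 := hev.self_of_nhds
      rw [hψ0] at h00
      simp at h00
      exact hg0 h00.symm
    have hderψ : deriv ψ z₀ = 0 := by
      have h1 : deriv ψ z₀ = deriv φ z₀ := deriv_sub_const _
      rw [h1, hd]
    have hn1 : n ≠ 1 := by
      rintro rfl
      have hgd : HasDerivAt (fun z => (z - z₀) ^ 1 • g z) (g z₀) z₀ := by
        simpa [smul_eq_mul] using
          (((hasDerivAt_id z₀).sub_const z₀).fun_mul hg.differentiableAt.hasDerivAt)
      have h2 : deriv ψ z₀ = g z₀ :=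
        (Filter.EventuallyEq.deriv_eq hev).trans hgd.deriv
      rw [hderψ] at h2
      exact hg0 h2.symm
    have hn2 : 2 ≤ n := by omega
    have hn' : (n : ℂ) ≠ 0 := by exact_mod_cast hn0
    set G : ℂ → ℂ := fun z => g z / g z₀ with hGdef
    have hG1 : G z₀ = 1 := div_self hg0
    have hGa : AnalyticAt ℂ G z₀ := hg.div analyticAt_const hg0
    have hGs : HasStrictDerivAt G (deriv G z₀) z₀ :=
      (show ContDiffAt ℂ 1 G z₀ from hGa.contDiffAt).hasStrictDerivAt one_ne_zero
    have hlog : HasStrictDerivAt (fun z => Complex.log (G z)) ((G z₀)⁻¹ * deriv G z₀) z₀ := by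
      have h1 : HasStrictDerivAt Complex.log (G z₀)⁻¹ (G z₀) :=
        Complex.hasStrictDerivAt_log (by rw [hG1]; exact Complex.one_mem_slitPlane)
      exact h1.comp z₀ hGs
    set c : ℂ := Complex.exp (Complex.log (g z₀) / n) with hcdef
    have hc0 : c ≠ 0 := Complex.exp_ne_zero _
    set w : ℂ → ℂ := fun z => c * Complex.exp (Complex.log (G z) / n) with hwdef
    have hw : HasStrictDerivAt w
        (c * (Complex.exp (Complex.log (G z₀) / n) * (((G z₀)⁻¹ * deriv G z₀) / n))) z₀ := by
      have he : HasStrictDerivAt (fun z => Complex.exp (Complex.log (G z) / n))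
          (Complex.exp (Complex.log (G z₀) / n) * (((G z₀)⁻¹ * deriv G z₀) / n)) z₀ := by
        have h3 := (Complex.hasStrictDerivAt_exp (Complex.log (G z₀) / n)).comp z₀
          (hlog.div_const (n : ℂ))
        exact h3
      simpa using he.const_mul c
    have hwz₀ : w z₀ = c := by
      rw [hwdef]; simp [hG1]
    set F : ℂ → ℂ := fun z => (z - z₀) * w z with hFdef
    obtain ⟨d, hw⟩ : ∃ d, HasStrictDerivAt w d z₀ := ⟨_, hw⟩
    have hF : HasStrictDerivAt F c z₀ := by
      have h2 := HasStrictDerivAt.mul ((hasStrictDerivAt_id z₀).sub_const z₀) hw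
      rw [show c = 1 * w z₀ + (z₀ - z₀) * d from by rw [hwz₀]; ring]
      exact h2
    have hF0 : F z₀ = 0 := by rw [hFdef]; simp
    have hmap : Filter.map F (𝓝 z₀) = 𝓝 0 := by
      have h4 := hF.map_nhds_eq hc0
      rwa [hF0] at h4
    have hgne : ∀ᶠ z in 𝓝 z₀, g z ≠ 0 := hg.continuousAt.eventually_ne hg0
    have hevF : ∀ᶠ z in 𝓝 z₀, ψ z = F z ^ n := by
      filter_upwards [hev, hgne] with z h1 h2
      have hGz0 : G z ≠ 0 := div_ne_zero h2 hg0
      have hcn : c ^ n = g z₀ := by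
        rw [hcdef, ← Complex.exp_nat_mul]
        rw [show (n : ℂ) * (Complex.log (g z₀) / n) = Complex.log (g z₀) by field_simp]
        exact Complex.exp_log hg0
      have hen : (Complex.exp (Complex.log (G z) / n)) ^ n = G z := by
        rw [← Complex.exp_nat_mul]
        rw [show (n : ℂ) * (Complex.log (G z) / n) = Complex.log (G z) by field_simp]
        exact Complex.exp_log hGz0
      have hwn : w z ^ n = g z := by
        rw [hwdef]
        simp only [mul_pow, hcn, hen, hGdef]
        rw [show Complex.exp (Complex.log (g z / g z₀) / n) ^ n = g z / g z₀ from hen, mul_div_cancel₀ _ hg0]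
      rw [hFdef]
      simp only [mul_pow, hwn]
      simpa [smul_eq_mul] using h1
    set ζ : ℂ := Complex.exp ((2 * Real.pi / n : ℝ) * Complex.I) with hζdef
    have hζn : ζ ^ n = 1 := by
      rw [hζdef, ← Complex.exp_nat_mul]
      rw [show (n : ℂ) * (((2 * Real.pi / n : ℝ) : ℂ) * Complex.I)
          = 2 * (Real.pi : ℂ) * Complex.I by push_cast; field_simp]
      exact Complex.exp_two_pi_mul_I
    have hζ1 : ζ ≠ 1 := by
      rw [hζdef]
      intro h
      rcases Complex.exp_eq_one_iff.1 h with ⟨k, hk⟩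
      have him := congrArg Complex.im hk
      simp [Complex.ofReal_mul, Complex.mul_im] at him
      have hπ := Real.pi_pos
      have hnR : (2:ℝ) ≤ n := by exact_mod_cast hn2
      have hnpos : (0:ℝ) < n := by linarith
      have h5 : (0:ℝ) < 2 * Real.pi / n := by positivity
      have h6 : 2 * Real.pi / n ≤ Real.pi := by
        rw [div_le_iff₀ hnpos]; nlinarith
      rcases le_or_gt (k:ℝ) 0 with hk0 | hk0
      · nlinarith [him]
      · have hk1 : (1:ℝ) ≤ (k:ℝ) := by exact_mod_cast hk0
        nlinarith [him]
    have hW : {z | ψ z = F z ^ n} ∩ U ∈ 𝓝 z₀ := inter_mem hevF hUz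
    have himg : F '' ({z | ψ z = F z ^ n} ∩ U) ∈ 𝓝 (0:ℂ) := by
      rw [← hmap]; exact Filter.image_mem_map hW
    rcases Metric.mem_nhds_iff.1 himg with ⟨δ, hδ, hball⟩
    set r : ℂ := ((δ/2 : ℝ) : ℂ) with hrdef
    have hr0 : r ≠ 0 := by
      rw [hrdef]
      exact_mod_cast (by positivity : (δ/2 : ℝ) ≠ 0)
    have habs : ‖r‖ = δ/2 := by
      rw [hrdef, Complex.norm_real, Real.norm_eq_abs, abs_of_pos (by positivity)]
    have hrmem : r ∈ Metric.ball (0:ℂ) δ := by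
      rw [Metric.mem_ball, dist_zero_right, habs]
      linarith
    have hζr : ζ * r ∈ Metric.ball (0:ℂ) δ := by
      rw [Metric.mem_ball, dist_zero_right, norm_mul,
        habs, hζdef, Complex.norm_exp_ofReal_mul_I, one_mul]
      linarith
    obtain ⟨a, ⟨ha1, ha2⟩, hFa⟩ := hball hrmem
    obtain ⟨b, ⟨hb1, hb2⟩, hFb⟩ := hball hζr
    have hψab : ψ a = ψ b := by
      rw [ha1, hb1, hFa, hFb, mul_pow, hζn, one_mul]
    have hφab : φ a = φ b := sub_left_injective (by exact hψab)
    have hab : a = b := hinj ha2 hb2 hφab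
    rw [hab, hFb] at hFa
    apply hζ1
    have h7 : ζ * r = 1 * r := by rw [one_mul, hFa]
    exact mul_right_cancel₀ hr0 h7


lemma wDeriv_mul {u v : ℂ → ℂ} {z : ℂ} (hu : DifferentiableAt ℝ u z)
    (hv : DifferentiableAt ℝ v z) :
    wDeriv (fun w => u w * v w) z = wDeriv u z * v z + u z * wDeriv v z := by
  unfold wDeriv
  rw [fderiv_fun_mul hu hv]
  simp only [ContinuousLinearMap.add_apply, ContinuousLinearMap.smul_apply, smul_eq_mul]
  ring

lemma wDeriv_congr_zero {f : ℂ → ℂ} {z : ℂ} (h : f =ᶠ[𝓝 z] 0) : wDeriv f z = 0 := by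
  unfold wDeriv
  rw [h.fderiv_eq, show (0:ℂ→ℂ) = fun _ => (0:ℂ) from rfl, fderiv_fun_const]
  simp

lemma wDeriv_log_abs_sq {h : ℂ → ℂ} {z : ℂ} (hh : AnalyticAt ℂ h z) (hz : h z ≠ 0) :
    DifferentiableAt ℝ (fun w => ((Real.log (‖h w‖ ^ 2) : ℝ) : ℂ)) z ∧
    wDeriv (fun w => ((Real.log (‖h w‖ ^ 2) : ℝ) : ℂ)) z = deriv h z / h z := by
  set b := deriv h z with hb
  have hhd : HasDerivAt h b z := hh.differentiableAt.hasDerivAt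
  have hℓ : HasFDerivAt h ((ContinuousLinearMap.smulRight (1 : ℂ →L[ℂ] ℂ) b).restrictScalars ℝ) z :=
    hhd.hasFDerivAt.restrictScalars ℝ
  set ℓh := (ContinuousLinearMap.smulRight (1 : ℂ →L[ℂ] ℂ) b).restrictScalars ℝ with hℓh
  have hre : HasFDerivAt (fun w => (h w).re) (Complex.reCLM.comp ℓh) z :=
    (Complex.reCLM.hasFDerivAt).comp z hℓ
  have him : HasFDerivAt (fun w => (h w).im) (Complex.imCLM.comp ℓh) z :=
    (Complex.imCLM.hasFDerivAt).comp z hℓ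
  have hN : HasFDerivAt (fun w => Complex.normSq (h w))
      (((h z).re • (Complex.reCLM.comp ℓh) + (h z).re • (Complex.reCLM.comp ℓh)) +
        ((h z).im • (Complex.imCLM.comp ℓh) + (h z).im • (Complex.imCLM.comp ℓh))) z := by
    have := (hre.fun_mul hre).fun_add (him.fun_mul him)
    simpa [Complex.normSq_apply] using this
  have hN0 : Complex.normSq (h z) ≠ 0 := by
    simpa [Complex.normSq_eq_zero] using hz
  have hlog : HasDerivAt Real.log (Complex.normSq (h z))⁻¹ (Complex.normSq (h z)) :=
    Real.hasDerivAt_log hN0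
  have hL := hlog.comp_hasFDerivAt z hN
  have hLC := (Complex.ofRealCLM.hasFDerivAt).comp z hL
  have hfun : (fun w => ((Real.log (‖h w‖ ^ 2) : ℝ) : ℂ)) =
      (fun w => ((Real.log (Complex.normSq (h w)) : ℝ) : ℂ)) := by
    funext w; rw [Complex.sq_norm]
  have hLC' : HasFDerivAt (fun w => ((Real.log (Complex.normSq (h w)) : ℝ) : ℂ))
      (Complex.ofRealCLM.comp ((Complex.normSq (h z))⁻¹ •
        ((h z).re • (Complex.reCLM.comp ℓh) + (h z).re • (Complex.reCLM.comp ℓh) +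
          ((h z).im • (Complex.imCLM.comp ℓh) + (h z).im • (Complex.imCLM.comp ℓh))))) z := hLC
  constructor
  · rw [hfun]; exact hLC'.differentiableAt
  · rw [hfun]
    unfold wDeriv
    rw [hLC'.fderiv]
    simp only [ContinuousLinearMap.coe_comp', Function.comp_apply,
      ContinuousLinearMap.coe_smul', Pi.smul_apply, ContinuousLinearMap.add_apply,
      ContinuousLinearMap.smul_apply, ContinuousLinearMap.coe_restrictScalars',
      ContinuousLinearMap.smulRight_apply, ContinuousLinearMap.one_apply,
      Complex.ofRealCLM_apply, smul_eq_mul, one_smul]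
    simp only [hℓh, ContinuousLinearMap.coe_restrictScalars',
      ContinuousLinearMap.smulRight_apply, ContinuousLinearMap.one_apply, smul_eq_mul, one_mul,
      Complex.reCLM_apply, Complex.imCLM_apply, Complex.mul_re, Complex.mul_im,
      Complex.I_re, Complex.I_im]
    have hN2 : (h z).re ^ 2 + (h z).im ^ 2 ≠ 0 := by simpa [Complex.normSq_apply, sq] using hN0
    rw [eq_div_iff hz]
    apply Complex.ext <;>
      simp only [Complex.add_re, Complex.add_im, Complex.sub_re, Complex.sub_im,
        Complex.mul_re, Complex.mul_im, Complex.div_re, Complex.div_im, Complex.ofReal_re,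
        Complex.ofReal_im, Complex.I_re, Complex.I_im, Complex.normSq_apply, Complex.re_ofNat, Complex.im_ofNat] <;>
      field_simp <;>
      ring


lemma formCP_sub_apply {G : Type*} [Group G] (x y : FormCP G) (p q : Fin 2) :
    (x - y) p q = x p q - y p q := rfl

lemma formCP_zero_apply {G : Type*} [Group G] (p q : Fin 2) : (0 : FormCP G) p q = 0 := rfl

lemma wDeriv_zero_fun : (fun z => wDeriv (0 : ℂ → ℂ) z) = 0 := by
  funext z
  exact wDeriv_congr_zero Filter.EventuallyEq.rfl

lemma delOp_apply_zero {G : Type*} [Group G] (a : FormCP G) (q : Fin 2) :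
    delOp a 0 q = 0 := by
  simp [delOp]

lemma deltaOp_apply_zero {G : Type*} [Group G] (P : PartialConformalAction G) (a : FormCP G)
    (q : Fin 2) : deltaOp P a 0 q = 0 := by
  show delOp (DopF P a) 0 q - DopF P (delOp a) 0 q = 0
  rw [delOp_apply_zero]
  show (0:G →₀ (ℂ → ℂ)) - (delOp a 0 q).sum _ = 0
  rw [delOp_apply_zero, Finsupp.sum_zero_index, sub_zero]

lemma deltaOp_eq_zero {G : Type*} [Group G] (P : PartialConformalAction G) {a : FormCP G}
    (h : ∀ q, a 0 q = 0) : deltaOp P a = 0 := by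
  funext p q
  show delOp (DopF P a) p q - DopF P (delOp a) p q = (0 : FormCP G) p q
  rw [formCP_zero_apply]
  have h1 : DopF P a 0 q = 0 := by
    show (a 0 q).sum _ = 0
    rw [h q, Finsupp.sum_zero_index]
  have h2 : delOp a p q = 0 := by
    show (if p = 1 then (a 0 q).sum _ else 0) = 0
    rw [h q]
    simp [Finsupp.sum_zero_index]
  have h3 : delOp (DopF P a) p q = 0 := by
    show (if p = 1 then (DopF P a 0 q).sum _ else 0) = 0
    rw [h1]
    simp [Finsupp.sum_zero_index]
  have h4 : DopF P (delOp a) p q = 0 := by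
    show (delOp a p q).sum _ = 0
    rw [h2, Finsupp.sum_zero_index]
  rw [h3, h4, sub_zero]

/-- the modular differential `δ = [∂, D]` satisfies
`δ(f U*_g) = (∂ log g') f U*_g = (g''/g') f dz U*_g`, `δ² = 0`, and `δ∂ + ∂δ = 0`. -/
theorem modular_differential_properties {G : Type*} [Group G] (P : PartialConformalAction G)
    (g : G) (f : ℂ → ℂ) (q : Fin 2)
    (hf : ContDiff ℝ (⊤ : ℕ∞) f) (hfc : HasCompactSupport f) (hsupp : tsupport f ⊆ P.Dom g) :
    (deltaOp P (symCP g f q) = fun p q' =>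
      if p = 1 ∧ q' = q then
        Finsupp.single g (fun z => deriv (deriv (P.act g)) z / deriv (P.act g) z * f z)
      else 0) ∧
    (∀ a : FormCP G, deltaOp P (deltaOp P a) = 0) ∧
    (∀ a : FormCP G, deltaOp P (delOp a) + delOp (deltaOp P a) = 0) := by
  have hopen := P.isOpen_dom g
  set Lc : ℂ → ℂ := fun z => ((Real.log (‖deriv (P.act g) z‖ ^ 2) : ℝ) : ℂ)
    with hLc
  refine ⟨?_, ?_, ?_⟩
  · funext p q'
    show delOp (DopF P (symCP g f q)) p q' - DopF P (delOp (symCP g f q)) p q' = _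
    by_cases hp : p = 1
    · subst hp
      by_cases hq : q' = q
      · subst hq
        rw [if_pos ⟨rfl, rfl⟩]
        have hs : symCP g f q' 0 q' = Finsupp.single g f := by simp [symCP]
        have hD : DopF P (symCP g f q') 0 q' = Finsupp.single g (fun z => Lc z * f z) := by
          show (symCP g f q' 0 q').sum _ = _
          rw [hs, Finsupp.sum_single_index (by simp; rfl)]
        have h1 : delOp (DopF P (symCP g f q')) 1 q'
            = Finsupp.single g (fun z => wDeriv (fun w => Lc w * f w) z) := by
          show (if (1:Fin 2) = 1 then (DopF P (symCP g f q') 0 q').sum _ else 0) = _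
          rw [if_pos rfl, hD, Finsupp.sum_single_index]
          rw [wDeriv_zero_fun, Finsupp.single_zero]
        have h2 : delOp (symCP g f q') 1 q' = Finsupp.single g (fun z => wDeriv f z) := by
          show (if (1:Fin 2) = 1 then (symCP g f q' 0 q').sum _ else 0) = _
          rw [if_pos rfl, hs, Finsupp.sum_single_index]
          rw [wDeriv_zero_fun, Finsupp.single_zero]
        have h3 : DopF P (delOp (symCP g f q')) 1 q'
            = Finsupp.single g (fun z => Lc z * wDeriv f z) := by
          show (delOp (symCP g f q') 1 q').sum _ = _
          rw [h2, Finsupp.sum_single_index (by simp; rfl)]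
        rw [h1, h3, ← Finsupp.single_sub]
        congr 1
        funext z
        rw [Pi.sub_apply]
        by_cases hz : z ∈ P.Dom g
        · have hA : AnalyticOnNhd ℂ (P.act g) (P.Dom g) := (P.holo g).analyticOnNhd hopen
          have hh : AnalyticAt ℂ (deriv (P.act g)) z := hA.deriv z hz
          have hne : deriv (P.act g) z ≠ 0 :=
            deriv_ne_zero_of_injOn' hopen (P.holo g) (P.injOn g) hz
          obtain ⟨hdiff, hval⟩ := wDeriv_log_abs_sq hh hne
          have hfd : DifferentiableAt ℝ f z := (hf.differentiable (by simp)).differentiableAt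
          rw [wDeriv_mul hdiff hfd, hval]
          ring
        · have hzt : z ∉ tsupport f := fun hzt => hz (hsupp hzt)
          have hf0 : f =ᶠ[nhds z] 0 := notMem_tsupport_iff_eventuallyEq.1 hzt
          have hfz : f z = 0 := image_eq_zero_of_notMem_tsupport hzt
          have e1 : wDeriv (fun w => Lc w * f w) z = 0 := by
            apply wDeriv_congr_zero
            filter_upwards [hf0] with w hw
            simp [hw]
          have e2 : wDeriv f z = 0 := wDeriv_congr_zero hf0
          rw [e1, e2, hfz]
          ring
      · rw [if_neg (by tauto)]
        have hs : symCP g f q 0 q' = 0 := by simp [symCP, hq]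
        have hD : DopF P (symCP g f q) 0 q' = 0 := by
          show (symCP g f q 0 q').sum _ = 0
          rw [hs, Finsupp.sum_zero_index]
        have h1 : delOp (DopF P (symCP g f q)) 1 q' = 0 := by
          show (if (1:Fin 2) = 1 then (DopF P (symCP g f q) 0 q').sum _ else 0) = 0
          rw [if_pos rfl, hD, Finsupp.sum_zero_index]
        have h2 : delOp (symCP g f q) 1 q' = 0 := by
          show (if (1:Fin 2) = 1 then (symCP g f q 0 q').sum _ else 0) = 0
          rw [if_pos rfl, hs, Finsupp.sum_zero_index]
        have h3 : DopF P (delOp (symCP g f q)) 1 q' = 0 := by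
          show (delOp (symCP g f q) 1 q').sum _ = 0
          rw [h2, Finsupp.sum_zero_index]
        rw [h1, h3, sub_zero]
    · rw [if_neg (by tauto)]
      have h1 : delOp (DopF P (symCP g f q)) p q' = 0 := by
        show (if p = 1 then _ else 0) = 0
        rw [if_neg hp]
      have h2 : delOp (symCP g f q) p q' = 0 := by
        show (if p = 1 then _ else 0) = 0
        rw [if_neg hp]
      have h3 : DopF P (delOp (symCP g f q)) p q' = 0 := by
        show (delOp (symCP g f q) p q').sum _ = 0
        rw [h2, Finsupp.sum_zero_index]
      rw [h1, h3, sub_zero]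
  · intro a
    exact deltaOp_eq_zero P (fun q => deltaOp_apply_zero P a q)
  · intro a
    have h1 : deltaOp P (delOp a) = 0 :=
      deltaOp_eq_zero P (fun q => delOp_apply_zero a q)
    have h2 : delOp (deltaOp P a) = 0 := by
      funext p q
      show (if p = 1 then (deltaOp P a 0 q).sum _ else 0) = (0 : FormCP G) p q
      rw [formCP_zero_apply, deltaOp_apply_zero]
      simp [Finsupp.sum_zero_index]
    rw [h1, h2, add_zero]
end

section
/- Let g be holomorphic, injective on an open set, and let v₀ be in that set. For every smooth compactly supported function φ of two complex variables supported near (v₀, v₀), the distributional identity ∂_z(1/(z−v)) applied in z against (z−v)/(g(z)−g(v)) satisfies: ∫∫ δ²(z−v) ∂_z( ((z−v)/(g(z)−g(v))) φ(z,v) ) d²z d²v = ∫ ( −(g''(v)/(2 g'(v)²)) φ(v,v) + (1/g'(v)) (∂_z φ)(v,v) ) d²v, i.e. the diagonal evaluation of ∂_z of the holomorphic difference-quotient factor produces the Schwarzian-type coefficient −g''(v)/(2g'(v)²). -/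
open Topology Filter MeasureTheory

lemma wDeriv_congr {f h : ℂ → ℂ} {v : ℂ} (e : f =ᶠ[𝓝 v] h) : wDeriv f v = wDeriv h v := by
  unfold wDeriv
  rw [e.fderiv_eq]

lemma wDeriv_of_eventually_zero {f : ℂ → ℂ} {v : ℂ} (e : f =ᶠ[𝓝 v] 0) : wDeriv f v = 0 := by
  rw [wDeriv_congr e]
  have h0 : fderiv ℝ (0 : ℂ → ℂ) v = 0 := fderiv_const_apply 0
  simp [wDeriv, h0]

lemma wDeriv_mul_s17 {f ψ : ℂ → ℂ} {v c : ℂ} (hf : HasDerivAt f c v)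
    (hψ : DifferentiableAt ℝ ψ v) :
    wDeriv (fun z => f z * ψ z) v = c * ψ v + f v * wDeriv ψ v := by
  have hfR : HasFDerivAt f ((ContinuousLinearMap.restrictScalars ℝ
      ((1 : ℂ →L[ℂ] ℂ).smulRight c))) v := (hf.hasFDerivAt).restrictScalars ℝ
  have hmul := hfR.mul hψ.hasFDerivAt
  have hd : fderiv ℝ (fun z => f z * ψ z) v
      = f v • fderiv ℝ ψ v + ψ v • (ContinuousLinearMap.restrictScalars ℝ
        ((1 : ℂ →L[ℂ] ℂ).smulRight c)) := by
    rw [← hψ.hasFDerivAt.fderiv] at hmul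
    exact hmul.fderiv
  unfold wDeriv
  rw [hd]
  simp only [ContinuousLinearMap.add_apply, ContinuousLinearMap.smul_apply,
    ContinuousLinearMap.coe_restrictScalars', ContinuousLinearMap.smulRight_apply,
    ContinuousLinearMap.one_apply, smul_eq_mul, one_mul]
  have hI : Complex.I * Complex.I = -1 := Complex.I_mul_I
  linear_combination (-(ψ v * c) / 2) * hI

/-- diagonal evaluation of `∂_z` of the holomorphic difference-quotient factor
`K(z,v)` (the extension of `(z−v)/(g(z)−g(v))`):
`∫∫ δ²(z−v) ∂_z(K φ) d²z d²v = ∫ ( −(g''(v)/(2g'(v)²)) φ(v,v) + (1/g'(v)) ∂_z φ(v,v) ) d²v`. -/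
theorem diagonal_schwarzian_evaluation
    (g : ℂ → ℂ) (K φ : ℂ × ℂ → ℂ) (U : Set ℂ) (v₀ : ℂ)
    (hU : IsOpen U) (hv₀ : v₀ ∈ U)
    (hg : DifferentiableOn ℂ g U) (hinj : Set.InjOn g U)
    (hd : ∀ v ∈ U, deriv g v ≠ 0)
    (hKc : ContinuousOn K (U ×ˢ U))
    (hK1 : ∀ p ∈ U ×ˢ U, p.1 ≠ p.2 → K p = (p.1 - p.2) / (g p.1 - g p.2))
    (hK2 : ∀ v ∈ U, K (v, v) = 1 / deriv g v)
    (hφ : ContDiff ℝ (⊤ : ℕ∞) φ) (hφc : HasCompactSupport φ) (hφs : tsupport φ ⊆ U ×ˢ U) :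
    ∫ v : ℂ, wDeriv (fun z => K (z, v) * φ (z, v)) v =
      ∫ v : ℂ, (-(iteratedDeriv 2 g v) / (2 * (deriv g v) ^ 2) * φ (v, v)
        + (1 / deriv g v) * wDeriv (fun z => φ (z, v)) v) := by
  refine integral_congr_ae (Filter.Eventually.of_forall fun v => ?_)
  dsimp only
  by_cases hv : v ∈ U
  · -- main case
    obtain ⟨p, hp⟩ := hg.analyticAt (hU.mem_nhds hv)
    set G : ℂ → ℂ := dslope g v with hGdef
    have hGp : HasFPowerSeriesAt G p.fslope v := hp.has_fpower_series_dslope_fslope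
    have hGv : G v = deriv g v := dslope_same g v
    have hGd : HasDerivAt G (p.coeff 2) v := by
      have := hGp.hasDerivAt
      have h2 : (p.fslope 1 fun _ => (1 : ℂ)) = p.coeff 2 := by
        show p.fslope.coeff 1 = p.coeff 2
        rw [FormalMultilinearSeries.coeff_fslope]
      rwa [h2] at this
    -- second derivative
    have hit : iteratedDeriv 2 g v = 2 * p.coeff 2 := by
      obtain ⟨r, hball⟩ := hp
      have := hball.factorial_smul (1 : ℂ) 2
      rw [iteratedDeriv_eq_iteratedFDeriv, ← this]
      have h1 : ((p 2) fun _ => (1 : ℂ)) = p.coeff 2 := rfl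
      rw [h1]
      simp [Nat.factorial, nsmul_eq_mul]
    -- eventual equality of K(·,v) with G⁻¹
    have hev : (fun z => K (z, v)) =ᶠ[𝓝 v] fun z => (G z)⁻¹ := by
      filter_upwards [hU.mem_nhds hv] with z hz
      rcases eq_or_ne z v with rfl | hne
      · rw [hK2 z hz, hGv, one_div]
      · rw [hK1 (z, v) ⟨hz, hv⟩ hne]
        have : G z = (z - v)⁻¹ * (g z - g v) := by
          rw [hGdef, dslope_of_ne g hne, slope_def_field]
          field_simp
        rw [this, mul_inv, inv_inv, div_eq_mul_inv]
    have hGne : G v ≠ 0 := by rw [hGv]; exact hd v hv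
    have hFd : HasDerivAt (fun z => (G z)⁻¹) (-(p.coeff 2) / G v ^ 2) v := hGd.inv hGne
    have hK : HasDerivAt (fun z => K (z, v)) (-(p.coeff 2) / G v ^ 2) v :=
      hFd.congr_of_eventuallyEq hev
    have hψ : DifferentiableAt ℝ (fun z => φ (z, v)) v := by
      have h1 : DifferentiableAt ℝ φ (v, v) := (hφ.differentiable (by simp)).differentiableAt
      have h2 : DifferentiableAt ℝ (fun z : ℂ => ((z, v) : ℂ × ℂ)) v :=
        differentiableAt_id.prodMk (differentiableAt_const v)
      exact DifferentiableAt.comp (g := φ) v h1 h2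
    rw [wDeriv_mul_s17 hK hψ, hK2 v hv, hit, hGv]
    have := hd v hv
    field_simp
  · -- v ∉ U : everything vanishes near v
    have hnvv : (v, v) ∉ tsupport φ := fun h => hv (hφs h).2
    have hev : ∀ᶠ q in 𝓝 (v, v), φ q = 0 := by
      filter_upwards [(isClosed_tsupport φ).isOpen_compl.mem_nhds hnvv] with q hq
      exact image_eq_zero_of_notMem_tsupport hq
    have hc : ContinuousAt (fun z : ℂ => ((z, v) : ℂ × ℂ)) v :=
      (continuous_id.prodMk continuous_const).continuousAt
    have h0 : ∀ᶠ z in 𝓝 v, φ (z, v) = 0 := hc.eventually hev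
    have hL : wDeriv (fun z => K (z, v) * φ (z, v)) v = 0 := by
      apply wDeriv_of_eventually_zero
      filter_upwards [h0] with z hz
      simp [hz]
    have hR : wDeriv (fun z => φ (z, v)) v = 0 := by
      apply wDeriv_of_eventually_zero
      filter_upwards [h0] with z hz
      simp [hz]
    have hvv : φ (v, v) = 0 := h0.self_of_nhds
    rw [hL, hR, hvv]
    ring
end
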